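/- Define g : ℝ → ℝ by g(z) := z·(2Φ(z) − 1) + 2φ(z), where Φ and φ are the CDF and PDF of the standard normal distribution. Then g attains its global minimum uniquely at z = 0 with g(0) = √(2/π); that is, g(z) ≥ √(2/π) for all z ∈ ℝ, with equality if and only if z = 0. Consequently, for m ∈ ℝ, σ > 0 and y ∈ ℝ, the Gaussian CRPS satisfies σ·(g((y−m)/σ) − 1/√π) ≥ σ·(√2 − 1)/√π, with equality if and only if y = m. -/

import Mathlib

/-!
Since `φ' = -zφ`, the `φ`-terms of the derivative cancel and `g' = 2Φ - 1`. As `φ` is even,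
`Φ(0) = 1/2`, and as `φ > 0`, `Φ` is strictly increasing; so `g'` is negative on `(-∞, 0)` and
positive on `(0, ∞)`, and `g` has its strict global minimum `g(0) = 2φ(0) = √(2/π)` at `0`.
The CRPS statement is this bound at `z = (y - m)/σ`, scaled by `σ > 0`.
-/

open MeasureTheory

/-- The probability density function of the standard normal distribution `N(0,1)`. -/
noncomputable def stdNormalPDF (u : ℝ) : ℝ :=
  Real.exp (-u ^ 2 / 2) / Real.sqrt (2 * Real.pi)

/-- The cumulative distribution function of the standard normal distribution `N(0,1)`. -/
noncomputable def stdNormalCDF (z : ℝ) : ℝ :=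
  ∫ u in Set.Iic z, stdNormalPDF u

/-- `g(z) := z·(2Φ(z) − 1) + 2φ(z)`. -/
noncomputable def gCRPS (z : ℝ) : ℝ :=
  z * (2 * stdNormalCDF z - 1) + 2 * stdNormalPDF z

open Set ProbabilityTheory

lemma hasDerivAt_integral_Iic {f : ℝ → ℝ} (hf : Integrable f) {z : ℝ} (hz : ContinuousAt f z) :
    HasDerivAt (fun x ↦ ∫ u in Iic x, f u) (f z) z := by
  have hsplit : (fun x ↦ ∫ u in Iic x, f u) = fun x ↦ (∫ u in Iic 0, f u) + ∫ u in 0..x, f u := by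
    ext x
    rw [← intervalIntegral.integral_Iic_sub_Iic hf.integrableOn hf.integrableOn]
    ring
  rw [hsplit]
  exact ((intervalIntegral.integral_hasStrictDerivAt_right hf.intervalIntegrable
    hf.aestronglyMeasurable.stronglyMeasurableAtFilter hz).hasDerivAt).const_add _

lemma integral_Iic_zero_of_even {f : ℝ → ℝ} (hf : Integrable f) (heven : ∀ x, f (-x) = f x) :
    ∫ u in Iic 0, f u = (∫ u, f u) / 2 := by
  have hsymm : ∫ u in Iic 0, f u = ∫ u in Ioi 0, f u := by
    simpa [heven] using integral_comp_neg_Iic 0 f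
  have htotal := intervalIntegral.integral_Iic_add_Ioi (b := 0) hf.integrableOn hf.integrableOn
  linarith

lemma apply_lt_of_hasDerivAt_neg_of_pos {f f' : ℝ → ℝ} {a : ℝ} (hf : ∀ x, HasDerivAt f (f' x) x)
    (hneg : ∀ x < a, f' x < 0) (hpos : ∀ x, a < x → 0 < f' x) {z : ℝ} (hz : z ≠ a) :
    f a < f z := by
  have hcont : Continuous f := continuous_iff_continuousAt.2 fun x ↦ (hf x).continuousAt
  rcases hz.lt_or_gt with h | h
  · refine strictAntiOn_of_hasDerivWithinAt_neg (convex_Iic a) hcont.continuousOn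
      (fun x _ ↦ (hf x).hasDerivWithinAt) (fun x hx ↦ hneg x ?_) h.le self_mem_Iic h
    simpa using hx
  · refine strictMonoOn_of_hasDerivWithinAt_pos (convex_Ici a) hcont.continuousOn
      (fun x _ ↦ (hf x).hasDerivWithinAt) (fun x hx ↦ hpos x ?_) self_mem_Ici h.le h
    simpa using hx

lemma stdNormalPDF_eq_gaussianPDFReal : stdNormalPDF = gaussianPDFReal 0 1 := by
  ext u
  simp [stdNormalPDF, gaussianPDFReal, div_eq_inv_mul]

lemma integrable_stdNormalPDF : Integrable stdNormalPDF :=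
  stdNormalPDF_eq_gaussianPDFReal ▸ integrable_gaussianPDFReal 0 1

lemma integral_stdNormalPDF : ∫ u, stdNormalPDF u = 1 := by
  simpa [stdNormalPDF_eq_gaussianPDFReal] using integral_gaussianPDFReal_eq_one 0 one_ne_zero

lemma stdNormalPDF_pos (u : ℝ) : 0 < stdNormalPDF u := by
  unfold stdNormalPDF; positivity

lemma continuous_stdNormalPDF : Continuous stdNormalPDF := by
  unfold stdNormalPDF; fun_prop

lemma hasDerivAt_stdNormalPDF (z : ℝ) : HasDerivAt stdNormalPDF (-z * stdNormalPDF z) z := by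
  have hexponent : HasDerivAt (fun u : ℝ ↦ -u ^ 2 / 2) (-z) z :=
    ((hasDerivAt_pow 2 z).neg.div_const 2).congr_deriv (by ring)
  exact (hexponent.exp.div_const _).congr_deriv (by unfold stdNormalPDF; ring)

lemma hasDerivAt_stdNormalCDF (z : ℝ) : HasDerivAt stdNormalCDF (stdNormalPDF z) z :=
  hasDerivAt_integral_Iic integrable_stdNormalPDF continuous_stdNormalPDF.continuousAt

lemma stdNormalCDF_strictMono : StrictMono stdNormalCDF :=
  strictMono_of_hasDerivAt_pos hasDerivAt_stdNormalCDF stdNormalPDF_pos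

lemma stdNormalCDF_zero : stdNormalCDF 0 = 1 / 2 := by
  rw [stdNormalCDF, integral_Iic_zero_of_even integrable_stdNormalPDF (by simp [stdNormalPDF]),
    integral_stdNormalPDF]

lemma hasDerivAt_gCRPS (z : ℝ) : HasDerivAt gCRPS (2 * stdNormalCDF z - 1) z :=
  (((hasDerivAt_id' z).mul (((hasDerivAt_stdNormalCDF z).const_mul 2).sub_const 1)).add
    ((hasDerivAt_stdNormalPDF z).const_mul 2)).congr_deriv (by ring)

lemma gCRPS_zero : gCRPS 0 = Real.sqrt (2 / Real.pi) := by
  rw [gCRPS, stdNormalPDF, Real.sqrt_mul zero_le_two, Real.sqrt_div zero_le_two]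
  have hsqrt2 : Real.sqrt 2 ^ 2 = 2 := Real.sq_sqrt zero_le_two
  field_simp
  simp [hsqrt2]

lemma gCRPS_zero_lt {z : ℝ} (hz : z ≠ 0) : gCRPS 0 < gCRPS z :=
  apply_lt_of_hasDerivAt_neg_of_pos hasDerivAt_gCRPS
    (fun x hx ↦ by linarith [stdNormalCDF_strictMono hx, stdNormalCDF_zero])
    (fun x hx ↦ by linarith [stdNormalCDF_strictMono hx, stdNormalCDF_zero]) hz

lemma gCRPS_zero_le (z : ℝ) : gCRPS 0 ≤ gCRPS z := by
  rcases eq_or_ne z 0 with rfl | hz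
  exacts [le_rfl, (gCRPS_zero_lt hz).le]

lemma gCRPS_eq_gCRPS_zero_iff {z : ℝ} : gCRPS z = gCRPS 0 ↔ z = 0 :=
  ⟨fun h ↦ by_contra fun hz ↦ (gCRPS_zero_lt hz).ne' h, fun h ↦ h ▸ rfl⟩

/-- `g` attains its global minimum uniquely at `z = 0`, with `g(0) = √(2/π)`;
consequently, the Gaussian CRPS `σ·(g((y−m)/σ) − 1/√π)` is at least
`σ·(√2 − 1)/√π`, with equality iff `y = m`. -/
theorem g_min_at_zero :
    gCRPS 0 = Real.sqrt (2 / Real.pi) ∧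
    (∀ z : ℝ, Real.sqrt (2 / Real.pi) ≤ gCRPS z) ∧
    (∀ z : ℝ, gCRPS z = Real.sqrt (2 / Real.pi) ↔ z = 0) ∧
    (∀ m σ y : ℝ, 0 < σ →
      σ * (Real.sqrt 2 - 1) / Real.sqrt Real.pi ≤
        σ * (gCRPS ((y - m) / σ) - 1 / Real.sqrt Real.pi) ∧
      (σ * (gCRPS ((y - m) / σ) - 1 / Real.sqrt Real.pi) =
        σ * (Real.sqrt 2 - 1) / Real.sqrt Real.pi ↔ y = m)) := by
  refine ⟨gCRPS_zero, fun z ↦ gCRPS_zero ▸ gCRPS_zero_le z,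
    fun z ↦ gCRPS_zero ▸ gCRPS_eq_gCRPS_zero_iff, fun m σ y hσ ↦ ?_⟩
  have hbound : σ * (Real.sqrt 2 - 1) / Real.sqrt Real.pi =
      σ * (gCRPS 0 - 1 / Real.sqrt Real.pi) := by
    rw [gCRPS_zero, Real.sqrt_div zero_le_two]
    ring
  rw [hbound, mul_right_inj' hσ.ne', sub_left_inj, gCRPS_eq_gCRPS_zero_iff, div_eq_zero_iff,
    sub_eq_zero, or_iff_left hσ.ne']
  exact ⟨mul_le_mul_of_nonneg_left (sub_le_sub_right (gCRPS_zero_le _) _) hσ.le, Iff.rfl⟩
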